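/- arXiv:1112.2330 — 3 statements merged into one kernel-verified Lean document; each statement's English description precedes it below -/
import Mathlib

section
/- Let $0 < H < 1$ and $1 - H < \alpha < 1$. Then there exists a constant $C = C(H,\alpha)$ such that for all $z_1, z_2 > 0$, $z_2^{2(H+\alpha-1)} + z_1^{2(H+\alpha-1)} + \frac{|z_2 - z_1|^{2H} - z_1^{2H} - z_2^{2H}}{(z_1 z_2)^{1-\alpha}} \leq C |z_2 - z_1|^{2(H+\alpha-1)}$. -/
lemma key_rpow_aux (H α : ℝ) (hH0 : 0 < H) (hH1 : H < 1)
    (hα1 : 1 - H < α) (hα2 : α < 1) (z₁ z₂ : ℝ) (h1 : 0 < z₁) (h2 : 0 < z₂)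
    (hle : z₁ ≤ z₂) :
    z₂ ^ (2 * (H + α - 1)) + z₁ ^ (2 * (H + α - 1)) +
        ((z₂ - z₁) ^ (2 * H) - z₁ ^ (2 * H) - z₂ ^ (2 * H)) / (z₁ * z₂) ^ (1 - α) ≤
      5 * (z₂ - z₁) ^ (2 * (H + α - 1)) := by
  set β : ℝ := 2 * (H + α - 1) with hβdef
  set γ : ℝ := 1 - α with hγdef
  have hγ0 : 0 < γ := by simp [hγdef]; linarith
  have hβ0 : 0 < β := by simp [hβdef]; linarith
  have hβ2 : β ≤ 2 := by simp [hβdef]; linarith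
  have hexp : 0 ≤ 2 * H - γ := by simp [hγdef]; linarith
  set h : ℝ := z₂ - z₁ with hhdef
  have hh0 : 0 ≤ h := by simp [hhdef]; linarith
  have hhz2 : h ≤ z₂ := by simp [hhdef]; linarith
  -- key identity
  have hu : (0:ℝ) < z₁ ^ γ := Real.rpow_pos_of_pos h1 γ
  have hv : (0:ℝ) < z₂ ^ γ := Real.rpow_pos_of_pos h2 γ
  have key : z₂ ^ β + z₁ ^ β + (h ^ (2 * H) - z₁ ^ (2 * H) - z₂ ^ (2 * H)) / (z₁ * z₂) ^ γ
      = (z₁ ^ (2 * H - γ) - z₂ ^ (2 * H - γ)) * ((z₁ ^ γ)⁻¹ - (z₂ ^ γ)⁻¹)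
        + h ^ (2 * H) / (z₁ * z₂) ^ γ := by
    have e1 : z₁ ^ β = z₁ ^ (2 * H - γ) * (z₁ ^ γ)⁻¹ := by
      rw [← Real.rpow_neg h1.le, ← Real.rpow_add h1]
      congr 1; simp [hβdef, hγdef]; ring
    have e2 : z₂ ^ β = z₂ ^ (2 * H - γ) * (z₂ ^ γ)⁻¹ := by
      rw [← Real.rpow_neg h2.le, ← Real.rpow_add h2]
      congr 1; simp [hβdef, hγdef]; ring
    have e3 : (z₁ * z₂) ^ γ = z₁ ^ γ * z₂ ^ γ := Real.mul_rpow h1.le h2.le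
    have e4 : z₁ ^ (2 * H) = z₁ ^ (2 * H - γ) * z₁ ^ γ := by
      rw [← Real.rpow_add h1]; congr 1; ring
    have e5 : z₂ ^ (2 * H) = z₂ ^ (2 * H - γ) * z₂ ^ γ := by
      rw [← Real.rpow_add h2]; congr 1; ring
    rw [e1, e2, e3, e4, e5]
    field_simp
    ring
  have first_nonpos : (z₁ ^ (2 * H - γ) - z₂ ^ (2 * H - γ)) * ((z₁ ^ γ)⁻¹ - (z₂ ^ γ)⁻¹) ≤ 0 := by
    apply mul_nonpos_of_nonpos_of_nonneg
    · have := Real.rpow_le_rpow h1.le hle hexp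
      linarith
    · have := Real.rpow_le_rpow_of_nonpos h1 hle (neg_nonpos.mpr hγ0.le)
      rw [Real.rpow_neg h1.le, Real.rpow_neg h2.le] at this
      linarith
  rcases le_total h z₁ with hc | hc
  · -- case h ≤ z₁ : quotient term ≤ h ^ β
    have hq : h ^ (2 * H) / (z₁ * z₂) ^ γ ≤ h ^ β := by
      rcases eq_or_lt_of_le hh0 with h0 | h0
      · rw [← h0, Real.zero_rpow (by positivity), Real.zero_rpow hβ0.ne', zero_div]
      · have hd : (h * h) ^ γ ≤ (z₁ * z₂) ^ γ :=
          Real.rpow_le_rpow (by positivity) (mul_le_mul hc (le_trans hc hle) h0.le h1.le) hγ0.le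
        have hpos : (0:ℝ) < (h * h) ^ γ := Real.rpow_pos_of_pos (by positivity) γ
        calc h ^ (2 * H) / (z₁ * z₂) ^ γ ≤ h ^ (2 * H) / (h * h) ^ γ := by
              apply div_le_div_of_nonneg_left (by positivity) hpos hd
          _ = h ^ β := by
              rw [Real.mul_rpow h0.le h0.le, ← Real.rpow_add h0, eq_comm,
                ← Real.rpow_sub h0]
              congr 1; simp [hβdef, hγdef]; ring
    have hβnn : 0 ≤ h ^ β := Real.rpow_nonneg hh0 β
    calc z₂ ^ β + z₁ ^ β + (h ^ (2 * H) - z₁ ^ (2 * H) - z₂ ^ (2 * H)) / (z₁ * z₂) ^ γ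
        = (z₁ ^ (2 * H - γ) - z₂ ^ (2 * H - γ)) * ((z₁ ^ γ)⁻¹ - (z₂ ^ γ)⁻¹)
          + h ^ (2 * H) / (z₁ * z₂) ^ γ := key
      _ ≤ 0 + h ^ β := add_le_add first_nonpos hq
      _ ≤ 5 * h ^ β := by linarith
  · -- case z₁ ≤ h : quotient term ≤ 0 and powers bounded directly
    have hquot : (h ^ (2 * H) - z₁ ^ (2 * H) - z₂ ^ (2 * H)) / (z₁ * z₂) ^ γ ≤ 0 := by
      apply div_nonpos_of_nonpos_of_nonneg
      · have hb : h ^ (2 * H) ≤ z₂ ^ (2 * H) := Real.rpow_le_rpow hh0 hhz2 (by linarith)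
        have : (0:ℝ) < z₁ ^ (2 * H) := Real.rpow_pos_of_pos h1 _
        linarith
      · positivity
    have ha : z₁ ^ β ≤ h ^ β := Real.rpow_le_rpow h1.le hc hβ0.le
    have hb : z₂ ^ β ≤ 4 * h ^ β := by
      have hz2h : z₂ ≤ 2 * h := by simp [hhdef]; linarith
      have h0 : 0 < h := lt_of_lt_of_le h1 hc
      calc z₂ ^ β ≤ (2 * h) ^ β := Real.rpow_le_rpow h2.le hz2h hβ0.le
        _ = 2 ^ β * h ^ β := Real.mul_rpow (by norm_num) h0.le
        _ ≤ 2 ^ (2:ℝ) * h ^ β := by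
            apply mul_le_mul_of_nonneg_right
              (Real.rpow_le_rpow_of_exponent_le one_le_two hβ2) (Real.rpow_nonneg h0.le β)
        _ = 4 * h ^ β := by norm_num
    linarith

theorem key_rpow_inequality (H α : ℝ) (hH0 : 0 < H) (hH1 : H < 1)
    (hα1 : 1 - H < α) (hα2 : α < 1) :
    ∃ C : ℝ, 0 < C ∧ ∀ z₁ z₂ : ℝ, 0 < z₁ → 0 < z₂ →
      z₂ ^ (2 * (H + α - 1)) + z₁ ^ (2 * (H + α - 1)) +
        (|z₂ - z₁| ^ (2 * H) - z₁ ^ (2 * H) - z₂ ^ (2 * H)) / (z₁ * z₂) ^ (1 - α) ≤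
      C * |z₂ - z₁| ^ (2 * (H + α - 1)) := by
  refine ⟨5, by norm_num, fun z₁ z₂ h1 h2 => ?_⟩
  rcases le_total z₁ z₂ with hle | hle
  · rw [abs_of_nonneg (by linarith)]
    exact key_rpow_aux H α hH0 hH1 hα1 hα2 z₁ z₂ h1 h2 hle
  · rw [abs_sub_comm, abs_of_nonneg (by linarith), mul_comm z₁ z₂]
    have := key_rpow_aux H α hH0 hH1 hα1 hα2 z₂ z₁ h2 h1 hle
    rw [show (z₁ - z₂) ^ (2 * H) - z₁ ^ (2 * H) - z₂ ^ (2 * H)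
      = (z₁ - z₂) ^ (2 * H) - z₂ ^ (2 * H) - z₁ ^ (2 * H) from by ring]
    linarith
end

section
/- Let $B^H$ be a fractional Brownian motion with Hurst index $H \in (0,1)$ and $1-H < \alpha < 1$. For $0 \leq t_2 < t_1$ and $0 \leq s_2 < t_1$, define $I_3 = \left(E\left(\frac{B^H_{t_1} - B^H_{t_2}}{(t_1-t_2)^{1-\alpha}} - \frac{B^H_{t_1} - B^H_{s_2}}{(t_1-s_2)^{1-\alpha}}\right)^2\right)^{1/2}$. Then $I_3 \leq C(H,\alpha)|t_2 - s_2|^{H+\alpha-1}$ for a constant $C(H,\alpha)$ independent of $t_1, t_2, s_2$. -/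
open MeasureTheory

section FBMAux
open Real

lemma cov_ineq' {H a d : ℝ} (hH0 : 0 < H) (ha : 0 ≤ a) (hd : 0 ≤ d) :
    a ^ (2*H) + d ^ (2*H) - (a+d) ^ (2*H) ≤ 2 * (a ^ H * d ^ H) := by
  have h2 : ∀ x : ℝ, 0 ≤ x → x ^ (2*H) = x ^ H * x ^ H := fun x hx => by
    rw [show 2*H = H+H by ring, Real.rpow_add' hx (by positivity)]
  have key : ∀ u v : ℝ, 0 ≤ u → u ≤ v →
      u ^ (2*H) + v ^ (2*H) - (u+v) ^ (2*H) ≤ 2 * (u ^ H * v ^ H) := by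
    intro u v hu huv
    have hv : 0 ≤ v := hu.trans huv
    have h1 : v ^ (2*H) ≤ (u+v) ^ (2*H) :=
      Real.rpow_le_rpow hv (by linarith) (by positivity)
    have h3 : u ^ H ≤ v ^ H := Real.rpow_le_rpow hu huv hH0.le
    have h4 : 0 ≤ u ^ H := Real.rpow_nonneg hu H
    have h5 : 0 ≤ v ^ H := Real.rpow_nonneg hv H
    nlinarith [h2 u hu]
  rcases le_total a d with h | h
  · exact key a d ha h
  · have := key d a hd h
    rw [add_comm d a] at this
    linarith [mul_comm (d ^ H) (a ^ H)]

lemma diff_rpow_le' {α a d : ℝ} (hα0 : 0 ≤ α) (hα2 : α ≤ 1) (ha : 0 < a) (hd : 0 ≤ d) :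
    a ^ (α-1) - (a+d) ^ (α-1) ≤ a ^ (α-2) * d := by
  have hda : (0:ℝ) < 1 + d / a := by positivity
  have hber : (1 + d/a) ^ (1-α) ≤ 1 + (1-α) * (d/a) :=
    rpow_one_add_le_one_add_mul_self (by linarith [div_nonneg hd ha.le]) (by linarith) (by linarith)
  have hw1 : (1:ℝ) ≤ (1 + d/a) ^ (1-α) :=
    Real.one_le_rpow (by simpa using div_nonneg hd ha.le) (by linarith)
  have hsplit : (a+d) ^ (α-1) = a ^ (α-1) * ((1 + d/a) ^ (1-α))⁻¹ := by
    have : a + d = a * (1 + d/a) := by field_simp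
    rw [this, Real.mul_rpow ha.le hda.le, ← Real.rpow_neg hda.le]
    ring_nf
  have hinv : 1 - ((1 + d/a) ^ (1-α))⁻¹ ≤ d / a := by
    have hwpos : (0:ℝ) < (1 + d/a) ^ (1-α) := by positivity
    have h2 : (1 + d/a) ^ (1-α) - 1 ≤ d/a := by nlinarith [div_nonneg hd ha.le]
    have h3 : ((1 + d/a) ^ (1-α))⁻¹ ≥ 1 - ((1 + d/a) ^ (1-α) - 1) := by
      rw [ge_iff_le, ← sub_nonneg]
      have : ((1 + d/a) ^ (1-α))⁻¹ - (1 - ((1 + d/a) ^ (1-α) - 1))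
          = ((1 + d/a) ^ (1-α) - 1)^2 / (1 + d/a) ^ (1-α) := by field_simp; ring
      rw [this]; positivity
    linarith
  calc a ^ (α-1) - (a+d) ^ (α-1) = a ^ (α-1) * (1 - ((1 + d/a) ^ (1-α))⁻¹) := by
        rw [hsplit]; ring
    _ ≤ a ^ (α-1) * (d / a) := mul_le_mul_of_nonneg_left hinv (by positivity)
    _ = a ^ (α-2) * d := by
        rw [show α - 2 = (α-1) + (-1) by ring, Real.rpow_add ha, Real.rpow_neg_one]
        field_simp

lemma key_real' {H α a d : ℝ} (hH0 : 0 < H) (hH1 : H < 1) (hα1 : 1 - H < α) (hα2 : α < 1)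
    (ha : 0 < a) (hd : 0 < d) :
    (a ^ (α-1) - (a+d) ^ (α-1)) * a ^ H + (a+d) ^ (α-1) * d ^ H ≤ 2 * d ^ (H+α-1) := by
  have hb : 0 < a + d := by linarith
  have hβ : 0 < H + α - 1 := by linarith
  have ht2 : (a+d) ^ (α-1) * d ^ H ≤ d ^ (H+α-1) := by
    have h1 : (a+d) ^ (α-1) ≤ d ^ (α-1) :=
      Real.rpow_le_rpow_of_nonpos hd (by linarith) (by linarith)
    calc (a+d) ^ (α-1) * d ^ H ≤ d ^ (α-1) * d ^ H :=
          mul_le_mul_of_nonneg_right h1 (Real.rpow_nonneg hd.le H)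
      _ = d ^ (H+α-1) := by rw [← Real.rpow_add hd]; ring_nf
  have ht1 : (a ^ (α-1) - (a+d) ^ (α-1)) * a ^ H ≤ d ^ (H+α-1) := by
    rcases le_total a d with h | h
    · calc (a ^ (α-1) - (a+d) ^ (α-1)) * a ^ H ≤ a ^ (α-1) * a ^ H := by
            apply mul_le_mul_of_nonneg_right _ (Real.rpow_nonneg ha.le H)
            have := Real.rpow_nonneg hb.le (α-1); linarith
        _ = a ^ (H+α-1) := by rw [← Real.rpow_add ha]; ring_nf
        _ ≤ d ^ (H+α-1) := Real.rpow_le_rpow ha.le h hβ.le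
    · calc (a ^ (α-1) - (a+d) ^ (α-1)) * a ^ H ≤ (a ^ (α-2) * d) * a ^ H :=
            mul_le_mul_of_nonneg_right (diff_rpow_le' (by linarith) hα2.le ha hd.le)
              (Real.rpow_nonneg ha.le H)
        _ = a ^ (H+α-2) * d := by rw [mul_right_comm, ← Real.rpow_add ha]; ring_nf
        _ ≤ d ^ (H+α-2) * d := mul_le_mul_of_nonneg_right
            (Real.rpow_le_rpow_of_nonpos hd h (by linarith)) hd.le
        _ = d ^ (H+α-1) := by
            nth_rewrite 2 [show d = d ^ (1:ℝ) by rw [Real.rpow_one]]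
            rw [← Real.rpow_add hd]; ring_nf
  linarith

lemma real_bound' {H α a D : ℝ} (hH0 : 0 < H) (hH1 : H < 1) (hα1 : 1 - H < α) (hα2 : α < 1)
    (ha : 0 < a) (hD : 0 < D) :
    ((a ^ (α-1) - (a+D) ^ (α-1))^2 * a ^ (2*H)
      + (a ^ (α-1) - (a+D) ^ (α-1)) * (a+D) ^ (α-1) * (a ^ (2*H) + D ^ (2*H) - (a+D) ^ (2*H))
      + ((a+D) ^ (α-1))^2 * D ^ (2*H)) ^ ((1:ℝ)/2) ≤ 2 * D ^ (H+α-1) := by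
  set c₁ := a ^ (α-1) - (a+D) ^ (α-1) with hc₁def
  set c₂ := (a+D) ^ (α-1) with hc₂def
  have hb : 0 < a + D := by linarith
  have hc₂ : 0 ≤ c₂ := Real.rpow_nonneg hb.le _
  have hc₁ : 0 ≤ c₁ := by
    have : (a+D) ^ (α-1) ≤ a ^ (α-1) :=
      Real.rpow_le_rpow_of_nonpos ha (by linarith) (by linarith)
    simp only [hc₁def]; linarith
  have h2 : ∀ x : ℝ, 0 ≤ x → x ^ (2*H) = x ^ H * x ^ H := fun x hx => by
    rw [show 2*H = H+H by ring, Real.rpow_add' hx (by positivity)]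
  have haH : 0 ≤ a ^ H := Real.rpow_nonneg ha.le H
  have hDH : 0 ≤ D ^ H := Real.rpow_nonneg hD.le H
  have hcov := cov_ineq' (a := a) (d := D) hH0 ha.le hD.le
  have hV : c₁^2 * a ^ (2*H) + c₁ * c₂ * (a ^ (2*H) + D ^ (2*H) - (a+D) ^ (2*H))
      + c₂^2 * D ^ (2*H) ≤ (c₁ * a ^ H + c₂ * D ^ H)^2 := by
    have h5 := mul_le_mul_of_nonneg_left hcov (mul_nonneg hc₁ hc₂)
    nlinarith [h2 a ha.le, h2 D hD.le]
  calc (c₁^2 * a ^ (2*H) + c₁ * c₂ * (a ^ (2*H) + D ^ (2*H) - (a+D) ^ (2*H))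
        + c₂^2 * D ^ (2*H)) ^ ((1:ℝ)/2)
      = Real.sqrt (c₁^2 * a ^ (2*H) + c₁ * c₂ * (a ^ (2*H) + D ^ (2*H) - (a+D) ^ (2*H))
        + c₂^2 * D ^ (2*H)) := (Real.sqrt_eq_rpow _).symm
    _ ≤ Real.sqrt ((c₁ * a ^ H + c₂ * D ^ H)^2) := Real.sqrt_le_sqrt hV
    _ = c₁ * a ^ H + c₂ * D ^ H := Real.sqrt_sq (by positivity)
    _ ≤ 2 * D ^ (H+α-1) := key_real' hH0 hH1 hα1 hα2 ha hD


section
variable {Ω : Type*} [MeasurableSpace Ω] (μ : Measure Ω) (H : ℝ) (B : ℝ → Ω → ℝ)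

lemma incr_integrable
    (hint : ∀ s t, 0 ≤ s → 0 ≤ t → Integrable (fun ω => B s ω * B t ω) μ)
    {p q r s : ℝ} (hp : 0 ≤ p) (hq : 0 ≤ q) (hr : 0 ≤ r) (hs : 0 ≤ s) :
    Integrable (fun ω => (B p ω - B q ω) * (B r ω - B s ω)) μ := by
  have h : (fun ω => (B p ω - B q ω) * (B r ω - B s ω))
      = fun ω => (B p ω * B r ω - B p ω * B s ω) - (B q ω * B r ω - B q ω * B s ω) := by
    funext ω; ring
  rw [h]
  exact ((hint p r hp hr).sub (hint p s hp hs)).sub ((hint q r hq hr).sub (hint q s hq hs))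

lemma incr_integral
    (hint : ∀ s t, 0 ≤ s → 0 ≤ t → Integrable (fun ω => B s ω * B t ω) μ)
    (hcov : ∀ s t, 0 ≤ s → 0 ≤ t →
      ∫ ω, B s ω * B t ω ∂μ = (s ^ (2 * H) + t ^ (2 * H) - |t - s| ^ (2 * H)) / 2)
    {p q r s : ℝ} (hp : 0 ≤ p) (hq : 0 ≤ q) (hr : 0 ≤ r) (hs : 0 ≤ s) :
    ∫ ω, (B p ω - B q ω) * (B r ω - B s ω) ∂μ =
      ((p ^ (2*H) + r ^ (2*H) - |r-p| ^ (2*H)) - (p ^ (2*H) + s ^ (2*H) - |s-p| ^ (2*H))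
        - (q ^ (2*H) + r ^ (2*H) - |r-q| ^ (2*H)) + (q ^ (2*H) + s ^ (2*H) - |s-q| ^ (2*H))) / 2 := by
  have heq : ∫ ω, (B p ω - B q ω) * (B r ω - B s ω) ∂μ
      = ∫ ω, ((B p ω * B r ω - B p ω * B s ω) - (B q ω * B r ω - B q ω * B s ω)) ∂μ := by
    apply integral_congr_ae
    filter_upwards with ω
    ring
  have I1 : Integrable (fun ω => B p ω * B r ω - B p ω * B s ω) μ :=
    (hint p r hp hr).sub (hint p s hp hs)
  have I2 : Integrable (fun ω => B q ω * B r ω - B q ω * B s ω) μ :=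
    (hint q r hq hr).sub (hint q s hq hs)
  have e1 : ∫ ω, ((B p ω * B r ω - B p ω * B s ω) - (B q ω * B r ω - B q ω * B s ω)) ∂μ
      = (∫ ω, (B p ω * B r ω - B p ω * B s ω) ∂μ)
        - ∫ ω, (B q ω * B r ω - B q ω * B s ω) ∂μ := integral_sub I1 I2
  have e2 : ∫ ω, (B p ω * B r ω - B p ω * B s ω) ∂μ
      = (∫ ω, B p ω * B r ω ∂μ) - ∫ ω, B p ω * B s ω ∂μ :=
    integral_sub (hint p r hp hr) (hint p s hp hs)
  have e3 : ∫ ω, (B q ω * B r ω - B q ω * B s ω) ∂μ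
      = (∫ ω, B q ω * B r ω ∂μ) - ∫ ω, B q ω * B s ω ∂μ :=
    integral_sub (hint q r hq hr) (hint q s hq hs)
  rw [heq, e1, e2, e3, hcov p r hp hr, hcov p s hp hs, hcov q r hq hr, hcov q s hq hs]
  ring

lemma int_val (α : ℝ) (hH0 : 0 < H)
    (hint : ∀ s t, 0 ≤ s → 0 ≤ t → Integrable (fun ω => B s ω * B t ω) μ)
    (hcov : ∀ s t, 0 ≤ s → 0 ≤ t →
      ∫ ω, B s ω * B t ω ∂μ = (s ^ (2 * H) + t ^ (2 * H) - |t - s| ^ (2 * H)) / 2)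
    {t₁ t₂ s₂ : ℝ} (ht2 : 0 ≤ t₂) (h21 : t₂ < t₁) (hs2 : 0 ≤ s₂) (hs21 : s₂ < t₁) :
    ∫ ω, ((B t₁ ω - B t₂ ω) / (t₁ - t₂) ^ (1 - α) -
          (B t₁ ω - B s₂ ω) / (t₁ - s₂) ^ (1 - α)) ^ 2 ∂μ
      = ((t₁-t₂) ^ (α-1) - (t₁-s₂) ^ (α-1))^2 * (t₁-t₂) ^ (2*H)
        + ((t₁-t₂) ^ (α-1) - (t₁-s₂) ^ (α-1)) * (t₁-s₂) ^ (α-1)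
          * ((t₁-t₂) ^ (2*H) + |t₂-s₂| ^ (2*H) - (t₁-s₂) ^ (2*H))
        + ((t₁-s₂) ^ (α-1))^2 * |t₂-s₂| ^ (2*H) := by
  have ht1 : 0 ≤ t₁ := le_of_lt (lt_of_le_of_lt ht2 h21)
  have ha : (0:ℝ) < t₁ - t₂ := by linarith
  have hb : (0:ℝ) < t₁ - s₂ := by linarith
  set c₁ : ℝ := (t₁-t₂) ^ (α-1) - (t₁-s₂) ^ (α-1) with hc₁
  set c₂ : ℝ := (t₁-s₂) ^ (α-1) with hc₂
  have ea : (t₁ - t₂) ^ (α-1) = ((t₁-t₂) ^ (1-α))⁻¹ := by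
    rw [show α-1 = -(1-α) by ring, Real.rpow_neg ha.le]
  have eb : (t₁ - s₂) ^ (α-1) = ((t₁-s₂) ^ (1-α))⁻¹ := by
    rw [show α-1 = -(1-α) by ring, Real.rpow_neg hb.le]
  have hdiv : ∀ ω, ((B t₁ ω - B t₂ ω) / (t₁ - t₂) ^ (1 - α) -
        (B t₁ ω - B s₂ ω) / (t₁ - s₂) ^ (1 - α)) ^ 2
      = c₁^2 * ((B t₁ ω - B t₂ ω) * (B t₁ ω - B t₂ ω))
        + ((2*c₁*c₂) * ((B t₁ ω - B t₂ ω) * (B s₂ ω - B t₂ ω))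
        + c₂^2 * ((B s₂ ω - B t₂ ω) * (B s₂ ω - B t₂ ω))) := by
    intro ω
    rw [div_eq_mul_inv, div_eq_mul_inv, ← ea, ← eb, hc₁, hc₂]
    ring
  have i1 : Integrable (fun ω => c₁^2 * ((B t₁ ω - B t₂ ω) * (B t₁ ω - B t₂ ω))) μ :=
    (incr_integrable μ B hint ht1 ht2 ht1 ht2).const_mul _
  have i2 : Integrable (fun ω => (2*c₁*c₂) * ((B t₁ ω - B t₂ ω) * (B s₂ ω - B t₂ ω))) μ :=
    (incr_integrable μ B hint ht1 ht2 hs2 ht2).const_mul _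
  have i3 : Integrable (fun ω => c₂^2 * ((B s₂ ω - B t₂ ω) * (B s₂ ω - B t₂ ω))) μ :=
    (incr_integrable μ B hint hs2 ht2 hs2 ht2).const_mul _
  have h2H : (2*H) ≠ 0 := by positivity
  calc ∫ ω, ((B t₁ ω - B t₂ ω) / (t₁ - t₂) ^ (1 - α) -
          (B t₁ ω - B s₂ ω) / (t₁ - s₂) ^ (1 - α)) ^ 2 ∂μ
      = ∫ ω, (c₁^2 * ((B t₁ ω - B t₂ ω) * (B t₁ ω - B t₂ ω))
        + ((2*c₁*c₂) * ((B t₁ ω - B t₂ ω) * (B s₂ ω - B t₂ ω))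
        + c₂^2 * ((B s₂ ω - B t₂ ω) * (B s₂ ω - B t₂ ω)))) ∂μ :=
        integral_congr_ae (Filter.Eventually.of_forall hdiv)
    _ = c₁^2 * (∫ ω, (B t₁ ω - B t₂ ω) * (B t₁ ω - B t₂ ω) ∂μ)
        + ((2*c₁*c₂) * (∫ ω, (B t₁ ω - B t₂ ω) * (B s₂ ω - B t₂ ω) ∂μ)
        + c₂^2 * (∫ ω, (B s₂ ω - B t₂ ω) * (B s₂ ω - B t₂ ω) ∂μ)) := by
        have i23 : Integrable (fun ω => (2*c₁*c₂) * ((B t₁ ω - B t₂ ω) * (B s₂ ω - B t₂ ω))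
            + c₂^2 * ((B s₂ ω - B t₂ ω) * (B s₂ ω - B t₂ ω))) μ := i2.add i3
        have e1 : ∫ ω, (c₁^2 * ((B t₁ ω - B t₂ ω) * (B t₁ ω - B t₂ ω))
              + ((2*c₁*c₂) * ((B t₁ ω - B t₂ ω) * (B s₂ ω - B t₂ ω))
              + c₂^2 * ((B s₂ ω - B t₂ ω) * (B s₂ ω - B t₂ ω)))) ∂μ
            = (∫ ω, c₁^2 * ((B t₁ ω - B t₂ ω) * (B t₁ ω - B t₂ ω)) ∂μ)
              + ∫ ω, ((2*c₁*c₂) * ((B t₁ ω - B t₂ ω) * (B s₂ ω - B t₂ ω))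
              + c₂^2 * ((B s₂ ω - B t₂ ω) * (B s₂ ω - B t₂ ω))) ∂μ := integral_add i1 i23
        have e2 : ∫ ω, ((2*c₁*c₂) * ((B t₁ ω - B t₂ ω) * (B s₂ ω - B t₂ ω))
              + c₂^2 * ((B s₂ ω - B t₂ ω) * (B s₂ ω - B t₂ ω))) ∂μ
            = (∫ ω, (2*c₁*c₂) * ((B t₁ ω - B t₂ ω) * (B s₂ ω - B t₂ ω)) ∂μ)
              + ∫ ω, c₂^2 * ((B s₂ ω - B t₂ ω) * (B s₂ ω - B t₂ ω)) ∂μ := integral_add i2 i3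
        rw [e1, e2, integral_const_mul, integral_const_mul, integral_const_mul]
    _ = c₁^2 * (t₁-t₂) ^ (2*H)
        + c₁ * c₂ * ((t₁-t₂) ^ (2*H) + |t₂-s₂| ^ (2*H) - (t₁-s₂) ^ (2*H))
        + c₂^2 * |t₂-s₂| ^ (2*H) := by
        rw [incr_integral μ H B hint hcov ht1 ht2 ht1 ht2,
          incr_integral μ H B hint hcov ht1 ht2 hs2 ht2,
          incr_integral μ H B hint hcov hs2 ht2 hs2 ht2]
        simp only [sub_self, abs_zero, Real.zero_rpow h2H]
        rw [abs_sub_comm t₂ t₁, abs_of_pos ha, abs_sub_comm s₂ t₁, abs_of_pos hb,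
          abs_sub_comm s₂ t₂]
        ring
end


end FBMAux

/-- Bound on the increment term `I₃` in Lemma A.2 for fractional Brownian motion,
encoded through its mean and covariance. -/
theorem fBm_increment_I3_bound {Ω : Type*} [MeasurableSpace Ω]
    (μ : Measure Ω) [IsProbabilityMeasure μ] (H α : ℝ) (hH0 : 0 < H) (hH1 : H < 1)
    (hα1 : 1 - H < α) (hα2 : α < 1)
    (B : ℝ → Ω → ℝ)
    (hmeas : ∀ t, Measurable (B t))
    (h0 : ∀ ω, B 0 ω = 0)
    (hmean : ∀ t, 0 ≤ t → ∫ ω, B t ω ∂μ = 0)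
    (hint : ∀ s t, 0 ≤ s → 0 ≤ t → Integrable (fun ω => B s ω * B t ω) μ)
    (hcov : ∀ s t, 0 ≤ s → 0 ≤ t →
      ∫ ω, B s ω * B t ω ∂μ = (s ^ (2 * H) + t ^ (2 * H) - |t - s| ^ (2 * H)) / 2) :
    ∃ C : ℝ, 0 < C ∧ ∀ t₁ t₂ s₂ : ℝ, 0 ≤ t₂ → t₂ < t₁ → 0 ≤ s₂ → s₂ < t₁ →
      (∫ ω, ((B t₁ ω - B t₂ ω) / (t₁ - t₂) ^ (1 - α) -
          (B t₁ ω - B s₂ ω) / (t₁ - s₂) ^ (1 - α)) ^ 2 ∂μ) ^ ((1:ℝ)/2) ≤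
        C * |t₂ - s₂| ^ (H + α - 1) := by
  refine ⟨2, by norm_num, fun t₁ t₂ s₂ ht2 h21 hs2 hs21 => ?_⟩
  have hβ : (0:ℝ) < H + α - 1 := by linarith
  rcases lt_trichotomy t₂ s₂ with hlt | heq | hgt
  · -- t₂ < s₂ : swap roles
    have hswap : ∫ ω, ((B t₁ ω - B t₂ ω) / (t₁ - t₂) ^ (1 - α) -
          (B t₁ ω - B s₂ ω) / (t₁ - s₂) ^ (1 - α)) ^ 2 ∂μ
        = ∫ ω, ((B t₁ ω - B s₂ ω) / (t₁ - s₂) ^ (1 - α) -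
          (B t₁ ω - B t₂ ω) / (t₁ - t₂) ^ (1 - α)) ^ 2 ∂μ := by
      apply integral_congr_ae
      filter_upwards with ω
      ring
    rw [hswap, int_val μ H B α hH0 hint hcov hs2 hs21 ht2 h21, abs_sub_comm t₂ s₂]
    have hD : |s₂ - t₂| = s₂ - t₂ := abs_of_pos (by linarith)
    have hb' : t₁ - t₂ = (t₁ - s₂) + |s₂ - t₂| := by rw [hD]; ring
    rw [hb']
    exact real_bound' hH0 hH1 hα1 hα2 (by linarith) (by rw [hD]; linarith)
  · -- t₂ = s₂ : both sides vanish
    subst heq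
    have hzero : ∫ ω, ((B t₁ ω - B t₂ ω) / (t₁ - t₂) ^ (1 - α) -
          (B t₁ ω - B t₂ ω) / (t₁ - t₂) ^ (1 - α)) ^ 2 ∂μ = 0 := by
      have : ∀ ω : Ω, ((B t₁ ω - B t₂ ω) / (t₁ - t₂) ^ (1 - α) -
          (B t₁ ω - B t₂ ω) / (t₁ - t₂) ^ (1 - α)) ^ 2 = 0 := fun ω => by ring
      rw [integral_congr_ae (Filter.Eventually.of_forall this), integral_zero]
    rw [hzero, Real.zero_rpow (by norm_num), sub_self, abs_zero,
      Real.zero_rpow (ne_of_gt hβ), mul_zero]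
  · -- s₂ < t₂
    rw [int_val μ H B α hH0 hint hcov ht2 h21 hs2 hs21]
    have hD : |t₂ - s₂| = t₂ - s₂ := abs_of_pos (by linarith)
    have hb' : t₁ - s₂ = (t₁ - t₂) + |t₂ - s₂| := by rw [hD]; ring
    rw [hb']
    exact real_bound' hH0 hH1 hα1 hα2 (by linarith) (by rw [hD]; linarith)
end

section
/- Let $\theta > 0$ and $H \in (1/2, 1)$. Define $\sigma_T^2 = \int_0^T\int_0^T\int_0^s\int_0^t e^{-\theta u - \theta v}|u-v|^{2H-2}\,du\,dv\,ds\,dt$. Then there exists a constant $c > 0$ (depending on $\theta$ and $H$) and $T_0 > 0$ such that $\sigma_T^2 \geq c\, T^{2H}$ for all $T \geq T_0$; in particular $\sigma_T^2/T \to \infty$ as $T \to \infty$. -/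
/-! The inner double integral `F s t = ∫₀ᵗ ∫₀ˢ e^{-θu-θv} |u-v|^{2H-2} du dv` has a nonnegative
integrand, so it is monotone in both `s` and `t`; and since `|u-v|^{2H-2} ≥ 1` on the unit square,
`F 1 1 ≥ e^{-2θ}`. Integrating `F s t ≥ F 1 1` over `[1,T]²` gives `σ_T² ≥ e^{-2θ} (T-1)²`, which
is even quadratic in `T`. -/

open MeasureTheory intervalIntegral Filter Topology Set

namespace FBmOU

lemma mul_sub_le_integral_of_monotoneOn {g : ℝ → ℝ} {a b : ℝ} (ha : 0 ≤ a) (hab : a ≤ b)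
    (hg : MonotoneOn g (Icc 0 b)) (hg0 : 0 ≤ g 0) :
    g a * (b - a) ≤ ∫ x in (0:ℝ)..b, g x := by
  have hb : 0 ≤ b := ha.trans hab
  have hint : IntervalIntegrable g volume 0 b := (uIcc_of_le hb ▸ hg).intervalIntegrable
  have hg_nonneg : ∀ x ∈ Icc 0 b, 0 ≤ g x := fun x hx =>
    hg0.trans (hg ⟨le_rfl, hb⟩ hx hx.1)
  calc g a * (b - a) = ∫ _ in a..b, g a := by simp [mul_comm]
    _ ≤ ∫ x in a..b, g x :=
      integral_mono_on hab intervalIntegrable_const (hint.mono_set (by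
        rw [uIcc_of_le hab, uIcc_of_le hb]; exact Icc_subset_Icc ha le_rfl))
        fun x hx => hg ⟨ha, hab⟩ ⟨ha.trans hx.1, hx.2⟩ hx.1
    _ ≤ ∫ x in (0:ℝ)..b, g x :=
      integral_mono_interval ha hab le_rfl
        ((ae_restrict_iff' measurableSet_Ioc).2 (Eventually.of_forall fun x hx =>
          hg_nonneg x ⟨hx.1.le, hx.2⟩)) hint

lemma mul_sub_sq_le_integral_integral {F : ℝ → ℝ → ℝ} {a T : ℝ} (ha : 0 ≤ a) (haT : a ≤ T)
    (hs : ∀ t ∈ Icc 0 T, MonotoneOn (F · t) (Icc 0 T))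
    (ht : ∀ s ∈ Icc 0 T, MonotoneOn (F s) (Icc 0 T)) (h0 : 0 ≤ F 0 0) :
    F a a * (T - a) ^ 2 ≤ ∫ t in (0:ℝ)..T, ∫ s in (0:ℝ)..T, F s t := by
  have hT : 0 ≤ T := ha.trans haT
  have hint : ∀ t ∈ Icc 0 T, IntervalIntegrable (F · t) volume 0 T := fun t htT =>
    (uIcc_of_le hT ▸ hs t htT).intervalIntegrable
  have hmono : MonotoneOn (fun t => ∫ s in (0:ℝ)..T, F s t) (Icc 0 T) := fun t htT t' ht'T htt' =>
    integral_mono_on hT (hint t htT) (hint t' ht'T) fun s hsT => ht s hsT htT ht'T htt'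
  have hFa0 : 0 ≤ F 0 a := h0.trans (ht 0 ⟨le_rfl, hT⟩ ⟨le_rfl, hT⟩ ⟨ha, haT⟩ ha)
  have hF0 : 0 ≤ ∫ s in (0:ℝ)..T, F s 0 := integral_nonneg hT fun s hsT =>
    h0.trans (hs 0 ⟨le_rfl, hT⟩ ⟨le_rfl, hT⟩ hsT hsT.1)
  calc F a a * (T - a) ^ 2 = F a a * (T - a) * (T - a) := by ring
    _ ≤ (∫ s in (0:ℝ)..T, F s a) * (T - a) := mul_le_mul_of_nonneg_right
      (mul_sub_le_integral_of_monotoneOn ha haT (hs a ⟨ha, haT⟩) hFa0) (by linarith)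
    _ ≤ ∫ t in (0:ℝ)..T, ∫ s in (0:ℝ)..T, F s t :=
      mul_sub_le_integral_of_monotoneOn ha haT hmono hF0

section IteratedIntegral

variable {k : ℝ → ℝ → ℝ}

lemma monotoneOn_integral_integral_upper_left (hk : ∀ u v, 0 ≤ k u v)
    (hk_left : ∀ v s, IntervalIntegrable (k · v) volume 0 s)
    (hk_right : ∀ s t, 0 ≤ s → 0 ≤ t →
      IntervalIntegrable (fun v => ∫ u in (0:ℝ)..s, k u v) volume 0 t) {t : ℝ} (ht : 0 ≤ t) :
    MonotoneOn (fun s => ∫ v in (0:ℝ)..t, ∫ u in (0:ℝ)..s, k u v) (Ici 0) :=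
  fun s hs s' hs' hss' => integral_mono_on ht (hk_right s t hs ht) (hk_right s' t hs' ht)
    fun v _ => integral_mono_interval le_rfl hs hss'
      (Eventually.of_forall fun u => hk u v) (hk_left v s')

lemma monotoneOn_integral_integral_upper_right (hk : ∀ u v, 0 ≤ k u v)
    (hk_right : ∀ s t, 0 ≤ s → 0 ≤ t →
      IntervalIntegrable (fun v => ∫ u in (0:ℝ)..s, k u v) volume 0 t) {s : ℝ} (hs : 0 ≤ s) :
    MonotoneOn (fun t => ∫ v in (0:ℝ)..t, ∫ u in (0:ℝ)..s, k u v) (Ici 0) :=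
  fun _ ht t' ht' htt' => integral_mono_interval le_rfl ht htt'
    (Eventually.of_forall fun v => integral_nonneg hs fun u _ => hk u v)
    (hk_right s t' hs ht')

lemma mul_sub_sq_le_integral_integral_integral_integral (hk : ∀ u v, 0 ≤ k u v)
    (hk_left : ∀ v s, IntervalIntegrable (k · v) volume 0 s)
    (hk_right : ∀ s t, 0 ≤ s → 0 ≤ t →
      IntervalIntegrable (fun v => ∫ u in (0:ℝ)..s, k u v) volume 0 t) {a T : ℝ}
    (ha : 0 ≤ a) (haT : a ≤ T) :
    (∫ v in (0:ℝ)..a, ∫ u in (0:ℝ)..a, k u v) * (T - a) ^ 2 ≤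
      ∫ t in (0:ℝ)..T, ∫ s in (0:ℝ)..T, ∫ v in (0:ℝ)..t, ∫ u in (0:ℝ)..s, k u v :=
  mul_sub_sq_le_integral_integral (F := fun s t => ∫ v in (0:ℝ)..t, ∫ u in (0:ℝ)..s, k u v)
    ha haT
    (fun _ ht => (monotoneOn_integral_integral_upper_left hk hk_left hk_right ht.1).mono
      Icc_subset_Ici_self)
    (fun _ hs => (monotoneOn_integral_integral_upper_right hk hk_right hs.1).mono
      Icc_subset_Ici_self)
    (by simp)

end IteratedIntegral

lemma intervalIntegrable_abs_rpow {r : ℝ} (hr : -1 < r) (a b : ℝ) :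
    IntervalIntegrable (fun x : ℝ => |x| ^ r) volume a b := by
  have h0 : ∀ c, 0 ≤ c → IntervalIntegrable (fun x : ℝ => |x| ^ r) volume 0 c := fun c hc => by
    have h := intervalIntegrable_rpow' (a := 0) (b := c) hr
    rw [intervalIntegrable_iff, uIoc_of_le hc] at h ⊢
    exact h.congr_fun (fun x hx => by rw [abs_of_pos hx.1]) measurableSet_Ioc
  have h0' : ∀ c, IntervalIntegrable (fun x : ℝ => |x| ^ r) volume 0 c := fun c => by
    rcases le_total 0 c with hc | hc
    · exact h0 c hc
    · rw [IntervalIntegrable.iff_comp_neg, neg_zero]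
      simpa only [abs_neg] using h0 (-c) (by linarith)
  exact (h0' a).symm.trans (h0' b)

lemma intervalIntegrable_abs_sub_rpow {r : ℝ} (hr : -1 < r) (v a b : ℝ) :
    IntervalIntegrable (fun u : ℝ => |u - v| ^ r) volume a b := by
  simpa using (intervalIntegrable_abs_rpow hr (a - v) (b - v)).comp_sub_right v

lemma integral_abs_sub_rpow_le {r : ℝ} (hr : -1 < r) {s T v : ℝ} (hs : 0 ≤ s) (hsT : s ≤ T)
    (hv : 0 ≤ v) (hvT : v ≤ T) :
    ∫ u in (0:ℝ)..s, |u - v| ^ r ≤ ∫ x in (-T)..T, |x| ^ r := by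
  calc ∫ u in (0:ℝ)..s, |u - v| ^ r ≤ ∫ u in (v - T)..(v + T), |u - v| ^ r :=
        integral_mono_interval (by linarith) hs (by linarith)
          (Eventually.of_forall fun _ => by positivity)
          (intervalIntegrable_abs_sub_rpow hr v _ _)
    _ = ∫ x in (-T)..T, |x| ^ r := by
        simpa using integral_comp_sub_right (fun x : ℝ => |x| ^ r) (a := v - T) (b := v + T) v

section Kernel

variable {θ r : ℝ}

lemma intervalIntegrable_exp_mul_abs_sub_rpow (hr : -1 < r) (v a b : ℝ) :
    IntervalIntegrable (fun u => Real.exp (-θ * u - θ * v) * |u - v| ^ r) volume a b :=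
  (intervalIntegrable_abs_sub_rpow hr v a b).continuousOn_mul (by fun_prop)

lemma integral_exp_mul_abs_sub_rpow_le (hθ : 0 ≤ θ) (hr : -1 < r) {s T v : ℝ} (hs : 0 ≤ s)
    (hsT : s ≤ T) (hv : 0 ≤ v) (hvT : v ≤ T) :
    ∫ u in (0:ℝ)..s, Real.exp (-θ * u - θ * v) * |u - v| ^ r ≤ ∫ x in (-T)..T, |x| ^ r := by
  refine le_trans (integral_mono_on hs (intervalIntegrable_exp_mul_abs_sub_rpow hr v 0 s)
    (intervalIntegrable_abs_sub_rpow hr v 0 s) fun u hu => ?_)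
    (integral_abs_sub_rpow_le hr hs hsT hv hvT)
  exact mul_le_of_le_one_left (by positivity) (Real.exp_le_one_iff.2 (by nlinarith [hu.1]))

lemma intervalIntegrable_integral_exp_mul_abs_sub_rpow (hθ : 0 ≤ θ) (hr : -1 < r) {s t : ℝ}
    (hs : 0 ≤ s) (ht : 0 ≤ t) :
    IntervalIntegrable (fun v => ∫ u in (0:ℝ)..s, Real.exp (-θ * u - θ * v) * |u - v| ^ r)
      volume 0 t := by
  have hmeas : StronglyMeasurable
      (fun v => ∫ u in Ioc 0 s, Real.exp (-θ * u - θ * v) * |u - v| ^ r) :=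
    StronglyMeasurable.integral_prod_right'
      (f := fun p : ℝ × ℝ => Real.exp (-θ * p.2 - θ * p.1) * |p.2 - p.1| ^ r)
      (by fun_prop)
  rw [intervalIntegrable_iff_integrableOn_Ioc_of_le ht]
  refine Integrable.mono' (integrableOn_const (C := ∫ x in (-max s t)..(max s t), |x| ^ r)
    measure_Ioc_lt_top.ne) ?_ ?_
  · simpa only [integral_of_le hs] using hmeas.aestronglyMeasurable
  · refine (ae_restrict_iff' measurableSet_Ioc).2 (Eventually.of_forall fun v hv => ?_)
    rw [Real.norm_eq_abs, abs_of_nonneg (integral_nonneg hs fun u _ => by positivity)]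
    exact integral_exp_mul_abs_sub_rpow_le hθ hr hs (le_max_left _ _) hv.1.le
      (hv.2.trans (le_max_right _ _))

lemma exp_neg_two_mul_le_integral_integral_exp_mul_abs_sub_rpow (hθ : 0 ≤ θ) (hr : -1 < r)
    (hr0 : r ≤ 0) :
    Real.exp (-2 * θ) ≤
      ∫ v in (0:ℝ)..1, ∫ u in (0:ℝ)..1, Real.exp (-θ * u - θ * v) * |u - v| ^ r := by
  have hinner : ∀ v ∈ Icc (0:ℝ) 1,
      Real.exp (-2 * θ) ≤ ∫ u in (0:ℝ)..1, Real.exp (-θ * u - θ * v) * |u - v| ^ r := by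
    intro v hv
    have hle : (fun _ => Real.exp (-2 * θ)) ≤ᵐ[volume.restrict (Icc (0:ℝ) 1)]
        fun u => Real.exp (-θ * u - θ * v) * |u - v| ^ r := by
      filter_upwards [ae_restrict_of_ae (volume.ae_ne v), ae_restrict_mem measurableSet_Icc]
        with u huv hu
      have hexp : Real.exp (-2 * θ) ≤ Real.exp (-θ * u - θ * v) :=
        Real.exp_le_exp.2 (by nlinarith [hu.2, hv.2])
      have hpow : 1 ≤ |u - v| ^ r := Real.one_le_rpow_of_pos_of_le_one_of_nonpos
        (abs_pos.2 (sub_ne_zero.2 huv)) (abs_sub_le_iff.2 ⟨by linarith [hu.2, hv.1],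
          by linarith [hu.1, hv.2]⟩) hr0
      simpa using mul_le_mul hexp hpow zero_le_one (Real.exp_pos _).le
    simpa using integral_mono_ae_restrict zero_le_one intervalIntegrable_const
      (intervalIntegrable_exp_mul_abs_sub_rpow hr v 0 1) hle
  simpa using integral_mono_on zero_le_one intervalIntegrable_const
    (intervalIntegrable_integral_exp_mul_abs_sub_rpow hθ hr zero_le_one zero_le_one) hinner

end Kernel

lemma exists_mul_rpow_le_and_tendsto_div_atTop {f : ℝ → ℝ} {c p : ℝ} (hc : 0 < c) (hp : p ≤ 2)
    (hf : ∀ T, 1 ≤ T → c * (T - 1) ^ 2 ≤ f T) :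
    (∃ c' : ℝ, 0 < c' ∧ ∃ T₀ : ℝ, 0 < T₀ ∧ ∀ T : ℝ, T₀ ≤ T → c' * T ^ p ≤ f T) ∧
      Tendsto (fun T => f T / T) atTop atTop := by
  have hquad : ∀ T, 2 ≤ T → c / 4 * T ^ 2 ≤ f T := fun T hT =>
    le_trans (by nlinarith [sq_nonneg (T - 2)]) (hf T (by linarith))
  refine ⟨⟨c / 4, by positivity, 2, two_pos, fun T hT => le_trans ?_ (hquad T hT)⟩, ?_⟩
  · gcongr
    exact_mod_cast Real.rpow_le_rpow_of_exponent_le (by linarith) hp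
  · refine tendsto_atTop_mono' atTop ?_ (tendsto_id.const_mul_atTop (by positivity : 0 < c / 4))
    filter_upwards [eventually_ge_atTop 2] with T hT
    rw [id, le_div_iff₀ (by linarith)]
    linarith [hquad T hT]

end FBmOU

open FBmOU in
theorem sigma_sq_lower_bound (θ H : ℝ) (hθ : 0 < θ) (hH1 : 1 / 2 < H) (hH2 : H < 1) :
    (∃ c : ℝ, 0 < c ∧ ∃ T₀ : ℝ, 0 < T₀ ∧ ∀ T : ℝ, T₀ ≤ T →
      c * T ^ (2 * H) ≤
        ∫ t in (0:ℝ)..T, ∫ s in (0:ℝ)..T, ∫ v in (0:ℝ)..t, ∫ u in (0:ℝ)..s,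
          Real.exp (-θ * u - θ * v) * |u - v| ^ (2 * H - 2)) ∧
    Tendsto (fun T : ℝ =>
        (∫ t in (0:ℝ)..T, ∫ s in (0:ℝ)..T, ∫ v in (0:ℝ)..t, ∫ u in (0:ℝ)..s,
          Real.exp (-θ * u - θ * v) * |u - v| ^ (2 * H - 2)) / T)
      atTop atTop := by
  have hr : -1 < 2 * H - 2 := by linarith
  refine exists_mul_rpow_le_and_tendsto_div_atTop (Real.exp_pos (-2 * θ)) (by linarith)
    fun T hT => le_trans ?_ (mul_sub_sq_le_integral_integral_integral_integral
      (fun u v => by positivity) (fun v s => intervalIntegrable_exp_mul_abs_sub_rpow hr v 0 s)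
      (fun s t => intervalIntegrable_integral_exp_mul_abs_sub_rpow hθ.le hr) zero_le_one hT)
  gcongr
  exact exp_neg_two_mul_le_integral_integral_exp_mul_abs_sub_rpow hθ.le hr (by linarith)
end
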